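/- There do not exist three orthonormal bases of ℂ³ forming a 3-fold unbiased set (3UB); consequently there are no n-fold unbiased sets in dimension 3 for any n ≥ 3. -/

import Mathlib

open scoped InnerProductSpace

open scoped Classical in
/-- The set of full cycles (`card ι`-cycles) in the permutation group of `ι`. -/
noncomputable def nCycles (ι : Type) [Fintype ι] [DecidableEq ι] : Finset (Equiv.Perm ι) :=
  Finset.univ.filter fun σ => σ.IsCycle ∧ σ.support = Finset.univ

/-- A family of `n` orthonormal bases of `ℂ^d` is `n`-fold unbiased (an `n`UB) if for every
index tuple `x`, the sum over all `n`-cycles `σ` of the cyclic products of overlaps equals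
`(n-1)!/d^(n-1)`. -/
def IsNUB {ι : Type} [Fintype ι] [DecidableEq ι] {d : ℕ}
    (B : ι → OrthonormalBasis (Fin d) ℂ (EuclideanSpace ℂ (Fin d))) : Prop :=
  ∀ x : ι → Fin d,
    (∑ σ ∈ nCycles ι, ∏ y, ⟪B y (x y), B (σ y) (x (σ y))⟫_ℂ)
      = ((Fintype.card ι - 1).factorial : ℂ) / (d : ℂ) ^ (Fintype.card ι - 1)

/-!
For three bases the two 3-cycles contribute the triple product `T = ⟪u, v⟫⟪v, w⟫⟪w, u⟫` and its
conjugate, so the 3UB condition says `re T = 1 / d²`. Summing `T` over one of the bases gives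
`‖⟪u, v⟫‖²` (Parseval), so the bases are pairwise unbiased, `‖T‖² = 1 / d³`, and
`im T = ±√(d - 1) / d² ≠ 0`. But the `d` values `im T` along one basis sum to `im ‖⟪u, v⟫‖² = 0`,
which is impossible for odd `d`.

An `n`UB with `n ≥ 4` yields an `(n - 1)`UB by dropping one basis: summing the condition over the
index in that basis contracts it out of every cyclic product (Parseval again), and every
`(n - 1)`-cycle arises in this way from exactly `n - 1` of the `n`-cycles.
-/

open Equiv Equiv.Perm Finset ComplexConjugate
open scoped Nat

section FullCycles

variable {ι : Type} [Fintype ι] [DecidableEq ι]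

theorem mem_nCycles_iff_cycleType {σ : Perm ι} :
    σ ∈ nCycles ι ↔ σ.cycleType = {Fintype.card ι} := by
  simp only [nCycles, mem_filter, mem_univ, true_and]
  constructor
  · rintro ⟨hσ, hsupp⟩
    rw [hσ.cycleType, hsupp, card_univ]
  · intro h
    refine ⟨card_cycleType_eq_one.mp (by simp [h]), eq_univ_of_card _ ?_⟩
    rw [← sum_cycleType, h, Multiset.sum_singleton]

theorem card_nCycles (h : 2 ≤ Fintype.card ι) : #(nCycles ι) = (Fintype.card ι - 1)! := by
  have hfilter : nCycles ι = ({g | g.cycleType = {Fintype.card ι}} : Finset (Perm ι)) := by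
    ext σ
    rw [mem_nCycles_iff_cycleType, mem_filter, and_iff_right (mem_univ σ)]
  rw [hfilter, card_of_cycleType_singleton h le_rfl, Nat.choose_self, mul_one]

end FullCycles

theorem swap_mul_decomposeFin_symm {n : ℕ} (p : Fin (n + 1)) (e : Perm (Fin n)) :
    swap 0 p * decomposeFin.symm (p, e) = e.extendDomain (finSuccAboveEquiv 0) := by
  ext y
  refine Fin.cases ?_ (fun z => ?_) y
  · rw [extendDomain_apply_not_subtype (p := fun x => x ≠ 0) _ _ (not_not.mpr rfl)]
    simp
  · have := extendDomain_apply_image e (finSuccAboveEquiv 0) z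
    simp only [finSuccAboveEquiv_apply, Fin.succAbove_zero] at this
    simp [this]

theorem mem_nCycles_of_decomposeFin_symm_mem {n : ℕ} (hn : 2 ≤ n) {p : Fin (n + 1)}
    {e : Perm (Fin n)} (h : decomposeFin.symm (p, e) ∈ nCycles (Fin (n + 1))) :
    p ≠ 0 ∧ e ∈ nCycles (Fin n) := by
  set σ := decomposeFin.symm (p, e)
  obtain ⟨hcycle, hsupp⟩ : σ.IsCycle ∧ σ.support = univ := by simpa [nCycles] using h
  have hσ0 : σ 0 = p := decomposeFin_symm_apply_zero p e
  have hp : p ≠ 0 := by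
    rw [← hσ0, ← mem_support, hsupp]; exact mem_univ 0
  refine ⟨hp, ?_⟩
  have hσp : σ (σ 0) ≠ 0 := by
    intro h2
    have hswap := hcycle.eq_swap_of_apply_apply_eq_self (hσ0 ▸ hp) h2
    have := card_support_swap (hσ0 ▸ hp).symm
    rw [← hswap, hsupp, card_univ, Fintype.card_fin] at this
    omega
  -- `swap 0 p * σ` is `σ` with `0` spliced out of its cycle, i.e. `e` transported along `Fin.succ`
  have hsupp' := support_swap_mul_eq _ _ hσp
  have hcyc := hcycle.swap_mul (hσ0 ▸ hp) hσp
  rw [hσ0] at hcyc hsupp'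
  rw [mem_nCycles_iff_cycleType, Fintype.card_fin, ← cycleType_extendDomain (finSuccAboveEquiv 0),
    ← swap_mul_decomposeFin_symm p, hcyc.cycleType, hsupp', hsupp,
    card_sdiff_of_subset (subset_univ _)]
  simp

theorem nCycles_fin_succ {n : ℕ} (hn : 2 ≤ n) :
    nCycles (Fin (n + 1)) =
      ((univ.erase 0) ×ˢ nCycles (Fin n)).map decomposeFin.symm.toEmbedding := by
  refine eq_of_subset_of_card_le (fun σ hσ => ?_) ?_
  · obtain ⟨⟨p, e⟩, rfl⟩ := decomposeFin.symm.surjective σ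
    obtain ⟨hp, he⟩ := mem_nCycles_of_decomposeFin_symm_mem hn hσ
    exact mem_map_of_mem _ (mem_product.mpr ⟨mem_erase.mpr ⟨hp, mem_univ p⟩, he⟩)
  · rw [card_map, card_product, card_erase_of_mem (mem_univ 0), card_nCycles, card_nCycles]
    all_goals simp only [card_univ, Fintype.card_fin, Nat.add_sub_cancel]
    · exact (Nat.mul_factorial_pred (by omega)).le
    all_goals omega

theorem nCycles_fin_three : nCycles (Fin 3) = {finRotate 3, (finRotate 3)⁻¹} := by
  have hmem : finRotate 3 ∈ nCycles (Fin 3) := by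
    simp only [nCycles, mem_filter, mem_univ, true_and]
    exact ⟨isCycle_finRotate, support_finRotate⟩
  have hmem' : (finRotate 3)⁻¹ ∈ nCycles (Fin 3) := by
    simp only [nCycles, mem_filter, mem_univ, true_and, support_inv, isCycle_inv]
    exact ⟨isCycle_finRotate, support_finRotate⟩
  refine (eq_of_subset_of_card_le (insert_subset hmem (singleton_subset_iff.mpr hmem')) ?_).symm
  rw [card_nCycles (by simp), card_pair (by decide)]
  rfl

section OverlapProducts

variable {E : Type*} [NormedAddCommGroup E] [InnerProductSpace ℂ E]

noncomputable def cycleProduct {ι : Type} [Fintype ι] {d : ℕ}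
    (B : ι → OrthonormalBasis (Fin d) ℂ E) (x : ι → Fin d) (σ : Perm ι) : ℂ :=
  ∏ y, ⟪B y (x y), B (σ y) (x (σ y))⟫_ℂ

theorem sum_cycleProduct_cons_decomposeFin_symm {n d : ℕ}
    (B : Fin (n + 1) → OrthonormalBasis (Fin d) ℂ E) (x : Fin n → Fin d) (p : Fin n)
    (e : Perm (Fin n)) :
    ∑ j, cycleProduct B (Fin.cons j x) (decomposeFin.symm (p.succ, e)) =
      cycleProduct (fun z => B z.succ) x e := by
  set σ := decomposeFin.symm (p.succ, e)
  set z₀ := e.symm p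
  set f : Fin n → ℂ := fun z => ⟪B z.succ (x z), B (e z).succ (x (e z))⟫_ℂ
  have hfactor : ∀ (j : Fin d) z,
      ⟪B z.succ (x z), B (σ z.succ) ((Fin.cons j x : Fin (n + 1) → Fin d) (σ z.succ))⟫_ℂ =
        Function.update f z₀ ⟪B z₀.succ (x z₀), B 0 j⟫_ℂ z := by
    intro j z
    rcases eq_or_ne z z₀ with rfl | hz
    · simp [σ, z₀]
    · have hez : e z ≠ p := fun h => hz (e.eq_symm_apply.mpr h)
      rw [Function.update_of_ne hz, decomposeFin_symm_apply_succ,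
        swap_apply_of_ne_of_ne (Fin.succ_ne_zero _) (Fin.succ_injective _ |>.ne hez)]
      simp [f]
  calc ∑ j, cycleProduct B (Fin.cons j x) σ
      = ∑ j, ⟪B 0 j, B p.succ (x p)⟫_ℂ *
          (⟪B z₀.succ (x z₀), B 0 j⟫_ℂ * ∏ z ∈ univ \ {z₀}, f z) := by
        refine sum_congr rfl fun j _ => ?_
        rw [cycleProduct, Fin.prod_univ_succ]
        simp only [Fin.cons_succ, Fin.cons_zero, hfactor, prod_update_of_mem (mem_univ _)]
        simp [σ]
    _ = (∑ j, ⟪B z₀.succ (x z₀), B 0 j⟫_ℂ * ⟪B 0 j, B p.succ (x p)⟫_ℂ) *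
          ∏ z ∈ univ \ {z₀}, f z := by
        rw [sum_mul]
        exact sum_congr rfl fun j _ => by ring
    _ = f z₀ * ∏ z ∈ univ \ {z₀}, f z := by
        rw [OrthonormalBasis.sum_inner_mul_inner]
        simp [f, z₀]
    _ = cycleProduct (fun z => B z.succ) x e :=
        (prod_eq_mul_prod_sdiff_singleton_of_mem (mem_univ z₀) f).symm

noncomputable def tripleProduct (u v w : E) : ℂ := ⟪u, v⟫_ℂ * ⟪v, w⟫_ℂ * ⟪w, u⟫_ℂ

theorem tripleProduct_rotate (u v w : E) : tripleProduct u v w = tripleProduct v w u := by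
  unfold tripleProduct; ring

theorem norm_tripleProduct (u v w : E) :
    ‖tripleProduct u v w‖ = ‖⟪u, v⟫_ℂ‖ * ‖⟪v, w⟫_ℂ‖ * ‖⟪w, u⟫_ℂ‖ := by
  simp only [tripleProduct, norm_mul]

theorem sum_tripleProduct {ι : Type*} [Fintype ι] (b : OrthonormalBasis ι ℂ E) (u v : E) :
    ∑ i, tripleProduct u v (b i) = (‖⟪u, v⟫_ℂ‖ : ℂ) ^ 2 := by
  simp_rw [tripleProduct, mul_assoc, ← mul_sum, b.sum_inner_mul_inner]
  rw [← inner_conj_symm v u, Complex.mul_conj, Complex.normSq_eq_norm_sq, Complex.ofReal_pow]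

theorem sq_norm_inner_of_re_tripleProduct {ι : Type*} [Fintype ι] (b : OrthonormalBasis ι ℂ E)
    {u v : E} {r : ℝ} (h : ∀ i, (tripleProduct u v (b i)).re = r) :
    ‖⟪u, v⟫_ℂ‖ ^ 2 = Fintype.card ι * r := by
  have := congrArg Complex.re (sum_tripleProduct b u v)
  simpa [Complex.re_sum, h, ← Complex.ofReal_pow] using this.symm

theorem cycleProduct_finRotate_three {d : ℕ} (B : Fin 3 → OrthonormalBasis (Fin d) ℂ E)
    (x : Fin 3 → Fin d) :
    cycleProduct B x (finRotate 3) = tripleProduct (B 0 (x 0)) (B 1 (x 1)) (B 2 (x 2)) := by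
  simp [cycleProduct, tripleProduct, Fin.prod_univ_three]

theorem cycleProduct_finRotate_three_inv {d : ℕ} (B : Fin 3 → OrthonormalBasis (Fin d) ℂ E)
    (x : Fin 3 → Fin d) :
    cycleProduct B x (finRotate 3)⁻¹ =
      conj (tripleProduct (B 0 (x 0)) (B 1 (x 1)) (B 2 (x 2))) := by
  simp [cycleProduct, tripleProduct, Fin.prod_univ_three, show (-1 : Fin 3) = 2 from rfl]
  ring

end OverlapProducts

theorem IsNUB.succ {n d : ℕ} (hn : 2 ≤ n)
    {B : Fin (n + 1) → OrthonormalBasis (Fin d) ℂ (EuclideanSpace ℂ (Fin d))} (hB : IsNUB B) :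
    IsNUB (fun z : Fin n => B z.succ) := by
  intro x
  change ∑ e ∈ nCycles (Fin n), cycleProduct (fun z => B z.succ) x e = _
  set S := ∑ e ∈ nCycles (Fin n), cycleProduct (fun z => B z.succ) x e
  have hd : (d : ℂ) ≠ 0 := Nat.cast_ne_zero.mpr (x ⟨0, by omega⟩).pos.ne'
  have hsum : ∀ p ∈ univ.erase (0 : Fin (n + 1)), ∑ e ∈ nCycles (Fin n),
      ∑ j, cycleProduct B (Fin.cons j x) (decomposeFin.symm (p, e)) = S := by
    intro p hp
    obtain ⟨p, rfl⟩ := Fin.exists_succ_eq.mpr (ne_of_mem_erase hp)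
    exact sum_congr rfl fun e _ => sum_cycleProduct_cons_decomposeFin_symm B x p e
  have key : (n : ℂ) * S = d * (n ! / d ^ n) := by
    calc (n : ℂ) * S
        = ∑ p ∈ univ.erase 0, ∑ e ∈ nCycles (Fin n),
            ∑ j, cycleProduct B (Fin.cons j x) (decomposeFin.symm (p, e)) := by
          rw [sum_congr rfl hsum, sum_const, card_erase_of_mem (mem_univ 0)]
          simp
      _ = ∑ j, ∑ σ ∈ nCycles (Fin (n + 1)), cycleProduct B (Fin.cons j x) σ := by
          conv_rhs => rw [sum_comm, nCycles_fin_succ hn, sum_map, sum_product]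
          rfl
      _ = ∑ j : Fin d, (n ! / d ^ n : ℂ) :=
          sum_congr rfl fun j _ => by simpa [cycleProduct] using hB (Fin.cons j x)
      _ = d * (n ! / d ^ n) := by simp
  obtain ⟨m, rfl⟩ : ∃ m, n = m + 1 := ⟨n - 1, by omega⟩
  rw [Nat.factorial_succ, pow_succ] at key
  push_cast at key
  simp only [Fintype.card_fin, Nat.add_sub_cancel]
  field_simp at key ⊢
  exact key

theorem sum_ne_zero_of_forall_eq_or_eq_neg {ι : Type*} [Fintype ι] (hodd : Odd (Fintype.card ι))
    {q : ι → ℝ} {s : ℝ} (hs : s ≠ 0) (hq : ∀ i, q i = s ∨ q i = -s) : ∑ i, q i ≠ 0 := by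
  classical
  have hsign : ∀ i, q i = (2 * (if q i = s then 1 else 0) - 1) * s := by
    intro i
    rcases hq i with h | h
    · rw [if_pos h, h]; ring
    · rw [if_neg (fun h' => hs (by linarith)), h]; ring
  have hsum : ∑ i, q i = (2 * #{i | q i = s} - Fintype.card ι) * s := by
    rw [sum_congr rfl fun i _ => hsign i, ← sum_mul, sum_sub_distrib, ← mul_sum, sum_boole,
      sum_const, card_univ, nsmul_one]
  rw [hsum, mul_ne_zero_iff, sub_ne_zero]
  refine ⟨fun h => ?_, hs⟩
  have h' : 2 * #{i | q i = s} = Fintype.card ι := by exact_mod_cast h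
  exact Nat.not_even_iff_odd.mpr hodd ⟨_, h'.symm.trans (two_mul _)⟩

theorem IsNUB.re_tripleProduct {d : ℕ}
    {B : Fin 3 → OrthonormalBasis (Fin d) ℂ (EuclideanSpace ℂ (Fin d))} (hB : IsNUB B)
    (a b c : Fin d) : (tripleProduct (B 0 a) (B 1 b) (B 2 c)).re = 1 / d ^ 2 := by
  have h : ∑ σ ∈ nCycles (Fin 3), cycleProduct B ![a, b, c] σ = 2 / d ^ 2 := by
    simpa [cycleProduct] using hB ![a, b, c]
  rw [nCycles_fin_three, sum_pair (by decide), cycleProduct_finRotate_three,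
    cycleProduct_finRotate_three_inv, Complex.add_conj,
    show (2 / d ^ 2 : ℂ) = ((2 / d ^ 2 : ℝ) : ℂ) by push_cast; rfl, Complex.ofReal_inj] at h
  simp only [Matrix.cons_val] at h
  linear_combination h / 2

theorem not_isNUB_fin_three_of_odd {d : ℕ} (hd : Odd d) (hd1 : 1 < d)
    (B : Fin 3 → OrthonormalBasis (Fin d) ℂ (EuclideanSpace ℂ (Fin d))) : ¬ IsNUB B := by
  intro hB
  have hre := hB.re_tripleProduct
  have h01 : ∀ a b, ‖⟪B 0 a, B 1 b⟫_ℂ‖ ^ 2 = 1 / d := fun a b => by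
    rw [sq_norm_inner_of_re_tripleProduct (B 2) (hre a b), Fintype.card_fin]
    field_simp
  have h12 : ∀ b c, ‖⟪B 1 b, B 2 c⟫_ℂ‖ ^ 2 = 1 / d := fun b c => by
    rw [sq_norm_inner_of_re_tripleProduct (B 0) (r := 1 / d ^ 2) fun a => by
      rw [tripleProduct_rotate, tripleProduct_rotate]; exact hre a b c, Fintype.card_fin]
    field_simp
  have h20 : ∀ c a, ‖⟪B 2 c, B 0 a⟫_ℂ‖ ^ 2 = 1 / d := fun c a => by
    rw [sq_norm_inner_of_re_tripleProduct (B 1) (r := 1 / d ^ 2) fun b => by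
      rw [tripleProduct_rotate]; exact hre a b c, Fintype.card_fin]
    field_simp
  set a₀ : Fin d := ⟨0, by omega⟩
  set q : Fin d → ℝ := fun c => (tripleProduct (B 0 a₀) (B 1 a₀) (B 2 c)).im
  have hq_sq : ∀ c, q c ^ 2 = (d - 1) / d ^ 4 := by
    intro c
    rw [← Complex.sq_norm_sub_sq_re, hre, norm_tripleProduct, mul_pow, mul_pow, h01, h12, h20]
    field_simp
  have hq_sum : ∑ c, q c = 0 := by
    simp only [q, ← Complex.im_sum, sum_tripleProduct, ← Complex.ofReal_pow, Complex.ofReal_im]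
  have hq₀ : q a₀ ≠ 0 := by
    rw [← pow_ne_zero_iff two_ne_zero, hq_sq]
    have : (1 : ℝ) < d := by exact_mod_cast hd1
    exact div_ne_zero (by linarith) (by positivity)
  exact sum_ne_zero_of_forall_eq_or_eq_neg (by simpa using hd) hq₀
    (fun c => sq_eq_sq_iff_eq_or_eq_neg.mp ((hq_sq c).trans (hq_sq a₀).symm)) hq_sum

theorem not_isNUB_of_odd {n d : ℕ} (hd : Odd d) (hd1 : 1 < d) (hn : 3 ≤ n)
    (B : Fin n → OrthonormalBasis (Fin d) ℂ (EuclideanSpace ℂ (Fin d))) : ¬ IsNUB B := by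
  induction n, hn using Nat.le_induction with
  | base => exact not_isNUB_fin_three_of_odd hd hd1 B
  | succ n hn ih => exact fun hB => ih (fun z => B z.succ) (hB.succ (by omega))

/-- There is no `n`-fold unbiased set of orthonormal bases in dimension 3 for any `n ≥ 3`;
in particular no three orthonormal bases of `ℂ³` form a 3UB. -/
theorem stmt_12 (n : ℕ) (hn : 3 ≤ n)
    (B : Fin n → OrthonormalBasis (Fin 3) ℂ (EuclideanSpace ℂ (Fin 3))) :
    ¬ IsNUB B :=
  not_isNUB_of_odd (by decide) (by norm_num) hn B
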